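/- Let μ1, μ2, σ1, σ2 be strictly positive reals and let Y be a standard normal random variable (so X1 := μ1 + σ1·Y and X2 := μ2 − σ2·Y are jointly normal with correlation −1). Then the law of R := X1/X2, i.e. the pushforward of the standard Gaussian measure on ℝ under the map y ↦ (μ1 + σ1·y)/(μ2 − σ2·y), is absolutely continuous with respect to Lebesgue measure with density f_R(x) = ((μ1σ2 + μ2σ1)/√(2π)) · exp(−(1/2)·((μ2x − μ1)/(σ2x + σ1))²) / (σ2x + σ1)², where f_R(−σ1/σ2) := 0. -/

import Mathlib

/-!
The map `y ↦ (μ1 + σ1 y) / (μ2 - σ2 y)` is a Möbius transformation with determinant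
`D = μ1 σ2 + μ2 σ1 > 0`. Off one point on each side it is a bijection, with inverse
`g x = (μ2 x - μ1) / (σ2 x + σ1)` and `g' x = D / (σ2 x + σ1) ^ 2`, so the one-dimensional
change of variables formula turns the Gaussian density `φ` into `|g'| · φ ∘ g`.
-/

open Real MeasureTheory Set

/-- The standard Gaussian measure on `ℝ`, with density `(2π)^(−1/2) exp(−y²/2)`
with respect to Lebesgue measure. -/
noncomputable def stdGaussian : Measure ℝ :=
  volume.withDensity fun y => ENNReal.ofReal ((2 * π) ^ (-(1 / 2) : ℝ) * Real.exp (-y ^ 2 / 2))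

open scoped ENNReal

theorem map_withDensity_eq_withDensity_of_leftInvOn {f g g' : ℝ → ℝ} {s : Set ℝ}
    (φ : ℝ → ℝ≥0∞) (hf : Measurable f) (hs : MeasurableSet s) (hs_ae : volume sᶜ = 0)
    (hgs_ae : volume (g '' s)ᶜ = 0) (hfg : LeftInvOn f g s)
    (hg' : ∀ x ∈ s, HasDerivWithinAt g (g' x) s x) :
    (volume.withDensity φ).map f =
      volume.withDensity fun x => ENNReal.ofReal |g' x| * φ (g x) := by
  ext A hA
  rw [Measure.map_apply hf hA, withDensity_apply _ (hf hA), withDensity_apply _ hA]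
  calc ∫⁻ y in f ⁻¹' A, φ y = ∫⁻ y in g '' (A ∩ s), φ y := by
        rw [hfg.image_inter']
        exact setLIntegral_congr (inter_ae_eq_left_of_ae_eq_univ (ae_eq_univ.2 hgs_ae)).symm
    _ = ∫⁻ x in A ∩ s, ENNReal.ofReal |g' x| * φ (g x) :=
        lintegral_image_eq_lintegral_abs_deriv_mul (hA.inter hs)
          (fun x hx => (hg' x hx.2).mono inter_subset_right) (hfg.injOn.mono inter_subset_right) φ
    _ = ∫⁻ x in A, ENNReal.ofReal |g' x| * φ (g x) :=
        setLIntegral_congr (inter_ae_eq_left_of_ae_eq_univ (ae_eq_univ.2 hs_ae))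

theorem volume_setOf_mul_add_eq_zero {a b : ℝ} (ha : a ≠ 0) :
    volume {x : ℝ | a * x + b = 0} = 0 :=
  Set.Subsingleton.measure_zero
    (fun _ hx _ hy => mul_left_cancel₀ ha (add_right_cancel (hx.trans hy.symm))) _

section Mobius

variable {μ1 μ2 σ1 σ2 : ℝ}

theorem mobius_apply_mobiusInv (hD : μ1 * σ2 + μ2 * σ1 ≠ 0)
    {x : ℝ} (hx : σ2 * x + σ1 ≠ 0) :
    (μ1 + σ1 * ((μ2 * x - μ1) / (σ2 * x + σ1))) /
      (μ2 - σ2 * ((μ2 * x - μ1) / (σ2 * x + σ1))) = x := by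
  rw [mul_div_assoc', mul_div_assoc', add_div' _ _ _ hx, sub_div' hx,
    div_div_div_cancel_right₀ hx, div_eq_iff (by convert hD using 1; ring)]
  ring

theorem mobiusInv_apply_mobius (hD : μ1 * σ2 + μ2 * σ1 ≠ 0)
    {y : ℝ} (hy : μ2 - σ2 * y ≠ 0) :
    σ2 * ((μ1 + σ1 * y) / (μ2 - σ2 * y)) + σ1 ≠ 0 ∧
      (μ2 * ((μ1 + σ1 * y) / (μ2 - σ2 * y)) - μ1) /
        (σ2 * ((μ1 + σ1 * y) / (μ2 - σ2 * y)) + σ1) = y := by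
  have hD' : σ2 * (μ1 + σ1 * y) + σ1 * (μ2 - σ2 * y) ≠ 0 := by convert hD using 1; ring
  rw [mul_div_assoc', mul_div_assoc', div_add' _ _ _ hy, div_sub' hy,
    div_div_div_cancel_right₀ hy, div_eq_iff hD']
  exact ⟨div_ne_zero hD' hy, by ring⟩

theorem hasDerivAt_mobiusInv {x : ℝ} (hx : σ2 * x + σ1 ≠ 0) :
    HasDerivAt (fun x => (μ2 * x - μ1) / (σ2 * x + σ1))
      ((μ1 * σ2 + μ2 * σ1) / (σ2 * x + σ1) ^ 2) x :=
  ((((hasDerivAt_id' x).const_mul μ2).sub_const μ1).div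
    (((hasDerivAt_id' x).const_mul σ2).add_const σ1) hx).congr_deriv (by ring)

theorem volume_compl_image_mobiusInv (hD : μ1 * σ2 + μ2 * σ1 ≠ 0) (hσ2 : σ2 ≠ 0) :
    volume ((fun x => (μ2 * x - μ1) / (σ2 * x + σ1)) '' {x | σ2 * x + σ1 ≠ 0})ᶜ = 0 := by
  refine measure_mono_null (fun y hy => ?_)
    (volume_setOf_mul_add_eq_zero (b := μ2) (neg_ne_zero.2 hσ2))
  by_contra hy'
  obtain ⟨hfy, hgfy⟩ :=
    mobiusInv_apply_mobius hD (y := y) (by rwa [sub_eq_neg_add, neg_mul_eq_neg_mul])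
  exact hy ⟨_, hfy, hgfy⟩

end Mobius

theorem quotient_density_perfect_anticorrelation
    (μ1 μ2 σ1 σ2 : ℝ) (hμ1 : 0 < μ1) (hμ2 : 0 < μ2) (hσ1 : 0 < σ1) (hσ2 : 0 < σ2) :
    Measure.map (fun y : ℝ => (μ1 + σ1 * y) / (μ2 - σ2 * y)) stdGaussian =
      volume.withDensity fun x : ℝ => ENNReal.ofReal
        (if x = -σ1 / σ2 then 0 else
          (μ1 * σ2 + μ2 * σ1) / Real.sqrt (2 * π) *
            Real.exp (-(1 / 2) * ((μ2 * x - μ1) / (σ2 * x + σ1)) ^ 2) /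
              (σ2 * x + σ1) ^ 2) := by
  have hD : 0 < μ1 * σ2 + μ2 * σ1 := by positivity
  have hs_ae : volume {x : ℝ | σ2 * x + σ1 ≠ 0}ᶜ = 0 := by
    simpa only [compl_ofPred, not_not] using volume_setOf_mul_add_eq_zero hσ2.ne'
  rw [stdGaussian, map_withDensity_eq_withDensity_of_leftInvOn _ (by fun_prop)
    (measurableSet_eq_fun (by fun_prop) measurable_const).compl hs_ae
    (volume_compl_image_mobiusInv hD.ne' hσ2.ne') (fun x hx => mobius_apply_mobiusInv hD.ne' hx)
    (fun x hx => (hasDerivAt_mobiusInv hx).hasDerivWithinAt)]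
  congr 1
  funext x
  have hrpow : (2 * π) ^ (-(1 / 2) : ℝ) = (√(2 * π))⁻¹ := by
    rw [Real.rpow_neg (by positivity), Real.sqrt_eq_rpow]
  rw [abs_of_nonneg (by positivity), ← ENNReal.ofReal_mul (by positivity), hrpow]
  congr 1
  split_ifs with hx
  -- at the pole both densities are `_ / 0 = 0`
  · rw [hx, show σ2 * (-σ1 / σ2) + σ1 = 0 by field_simp; ring]
    simp
  · ring_nf
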